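/- Let G ⊂ K be a finite set containing 0, let A = {(y₁,…,y_k) ∈ G^k : yⱼ = 0 for at least one j} be the axis subset of the grid G^k. Let Φ : Kⁿ → ℝᴹ be an indexed k-Janossy latent map. If for two tail configurations u, v ∈ K^{n−k} we have Φ(x_b, u) = Φ(x_b, v) for every x_b ∈ A, then Φ(x_b, u) = Φ(x_b, v) for every x_b ∈ G^k. -/

import Mathlib

/-!
Put `F b = Φ (b, u) - Φ (b, v)` and take the alternating sum of `F` over the `2^k` points obtained
from `x` by setting the coordinates in `S` to `z`. A summand `φ_I` of `Φ` with every index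
of `I` in the base block contributes nothing to `F`; any other `I` has only `k` indices, one of them
in the tail, so by pigeonhole it misses some base coordinate `m`, and its contribution to the
alternating sum cancels in pairs `S`, `S ∪ {m}`. So the alternating sum vanishes; every point with
`S ≠ ∅` lies on an axis, where `F = 0` by hypothesis, leaving `F x = 0`.
-/

/-- The unit cube `[0,1]^d` in `ℝ^d`. -/
def unitCube (d : ℕ) : Set (Fin d → ℝ) := {x | ∀ i, x i ∈ Set.Icc (0 : ℝ) 1}

open Finset

section FiniteDifference

variable {ι α β : Type*} [Fintype ι] [DecidableEq ι] [AddCommGroup β]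

theorem sum_neg_one_pow_smul_piecewise_eq_zero (f : (ι → α) → β) (c x : ι → α) (m : ι)
    (hf : ∀ b b' : ι → α, (∀ j, j ≠ m → b j = b' j) → f b = f b') :
    ∑ S : Finset ι, (-1 : ℤ) ^ S.card • f (S.piecewise c x) = 0 := by
  rw [← powerset_univ, ← insert_erase (mem_univ m), sum_powerset_insert (notMem_erase m _),
    ← sum_add_distrib]
  refine sum_eq_zero fun t ht => ?_
  have hmt : m ∉ t := fun h => notMem_erase m _ (mem_powerset.1 ht h)
  have hft : f ((insert m t).piecewise c x) = f (t.piecewise c x) :=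
    hf _ _ fun j hj => piecewise_insert_of_ne _ _ _ hj
  rw [card_insert_of_notMem hmt, hft, pow_succ, mul_neg_one, neg_smul, add_neg_cancel]

theorem eq_zero_of_sum_neg_one_pow_smul_piecewise_eq_zero (f : (ι → α) → β) (c x : ι → α)
    (hsum : ∑ S : Finset ι, (-1 : ℤ) ^ S.card • f (S.piecewise c x) = 0)
    (hne : ∀ S : Finset ι, S.Nonempty → f (S.piecewise c x) = 0) : f x = 0 := by
  rwa [sum_eq_single ∅ (fun S _ hS => by rw [hne S (nonempty_iff_ne_empty.2 hS), smul_zero])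
    (fun h => absurd (mem_univ _) h), piecewise_empty, card_empty, pow_zero, one_smul] at hsum

end FiniteDifference

theorem exists_forall_val_ne_of_le_val {k n : ℕ} (I : Fin k → Fin n) {j₀ : Fin k}
    (hj₀ : k ≤ I j₀) : ∃ m : Fin k, ∀ j, (I j : ℕ) ≠ m := by
  by_contra! hhit
  choose s hs using hhit
  have hinj : Function.Injective s := fun a b h => Fin.ext (by rw [← hs a, ← hs b, h])
  obtain ⟨m, rfl⟩ := Finite.injective_iff_surjective.1 hinj j₀
  have := hs m
  omega

/-- The paper's `(x_b, x_e)` with `x_b = b`: only the coordinates `i ≥ k` of `w` are read. -/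
def withBase {α : Type*} {k n : ℕ} (b : Fin k → α) (w : Fin n → α) : Fin n → α :=
  fun i => if h : (i : ℕ) < k then b ⟨i, h⟩ else w i

section Janossy

variable {α β : Type*} {k n : ℕ}

theorem withBase_comp_eq_of_forall_lt (I : Fin k → Fin n) (hI : ∀ j, (I j : ℕ) < k)
    (b : Fin k → α) (u v : Fin n → α) :
    (fun j => withBase b u (I j)) = fun j => withBase b v (I j) :=
  funext fun j => by simp only [withBase, dif_pos (hI j)]

theorem withBase_comp_eq_of_forall_ne (I : Fin k → Fin n) {m : Fin k}
    (hI : ∀ j, (I j : ℕ) ≠ m) {b b' : Fin k → α} (hbb : ∀ j, j ≠ m → b j = b' j)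
    (w : Fin n → α) :
    (fun j => withBase b w (I j)) = fun j => withBase b' w (I j) := by
  funext j
  unfold withBase
  split_ifs with h
  · exact hbb _ fun he => hI j (congrArg Fin.val he)
  · rfl

theorem sum_neg_one_pow_smul_janossy_sub_eq_zero [AddCommGroup β]
    (φ : (Fin k → Fin n) → (Fin k → α) → β) (Φ : (Fin n → α) → β)
    (hΦ : ∀ x, Φ x = ∑ I : Fin k → Fin n, φ I (fun j => x (I j)))
    (u v : Fin n → α) (c x : Fin k → α) :
    ∑ S : Finset (Fin k), (-1 : ℤ) ^ S.card •
      (Φ (withBase (S.piecewise c x) u) - Φ (withBase (S.piecewise c x) v)) = 0 := by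
  simp only [hΦ, ← sum_sub_distrib, smul_sum]
  rw [sum_comm]
  refine sum_eq_zero fun I _ => ?_
  by_cases hI : ∀ j, (I j : ℕ) < k
  · simp only [withBase_comp_eq_of_forall_lt I hI _ u v, sub_self, smul_zero, sum_const_zero]
  · push Not at hI
    obtain ⟨j₀, hj₀⟩ := hI
    obtain ⟨m, hm⟩ := exists_forall_val_ne_of_le_val I hj₀
    refine sum_neg_one_pow_smul_piecewise_eq_zero
      (fun b => φ I (fun j => withBase b u (I j)) - φ I (fun j => withBase b v (I j))) c x m
      fun b b' hbb => ?_
    simp only [withBase_comp_eq_of_forall_ne I hm hbb]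

end Janossy

theorem stmt_3_general (d n k M : ℕ)
    (φ : (Fin k → Fin n) → (Fin k → unitCube d) → Fin M → ℝ)
    (Φ : (Fin n → unitCube d) → Fin M → ℝ)
    (hΦ : ∀ x, Φ x = ∑ I : Fin k → Fin n, φ I (fun j => x (I j)))
    (G : Finset (unitCube d)) (z : unitCube d) (hzG : z ∈ G)
    (u v : Fin n → unitCube d)
    (haxes : ∀ xb : Fin k → unitCube d, (∀ j, xb j ∈ G) → (∃ j, xb j = z) →
      Φ (fun i => if h : (i : ℕ) < k then xb ⟨(i : ℕ), h⟩ else u i)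
        = Φ (fun i => if h : (i : ℕ) < k then xb ⟨(i : ℕ), h⟩ else v i)) :
    ∀ xb : Fin k → unitCube d, (∀ j, xb j ∈ G) →
      Φ (fun i => if h : (i : ℕ) < k then xb ⟨(i : ℕ), h⟩ else u i)
        = Φ (fun i => if h : (i : ℕ) < k then xb ⟨(i : ℕ), h⟩ else v i) := by
  intro xb hxb
  refine sub_eq_zero.1 (eq_zero_of_sum_neg_one_pow_smul_piecewise_eq_zero
    (fun b => Φ (withBase b u) - Φ (withBase b v)) (fun _ => z) xb
    (sum_neg_one_pow_smul_janossy_sub_eq_zero φ Φ hΦ u v _ xb) fun S ⟨j, hj⟩ => ?_)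
  refine sub_eq_zero.2 (haxes _ (fun i => ?_) ⟨j, piecewise_eq_of_mem _ _ _ hj⟩)
  by_cases hi : i ∈ S <;> simp [hi, hzG, hxb i]

/-- for an indexed k-Janossy latent map, equality of tails on the
axis subset `A` of the grid `G^k` propagates to the full grid `G^k`. -/
theorem stmt_3 (d n k M : ℕ) (hk : 1 ≤ k) (hkn : k < n)
    (φ : (Fin k → Fin n) → (Fin k → unitCube d) → Fin M → ℝ)
    (Φ : (Fin n → unitCube d) → Fin M → ℝ)
    (hΦ : ∀ x, Φ x = ∑ I : Fin k → Fin n, φ I (fun j => x (I j)))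
    (G : Finset (unitCube d)) (z : unitCube d) (hz : (z : Fin d → ℝ) = 0) (hzG : z ∈ G)
    (u v : Fin n → unitCube d)
    (haxes : ∀ xb : Fin k → unitCube d, (∀ j, xb j ∈ G) → (∃ j, xb j = z) →
      Φ (fun i => if h : (i : ℕ) < k then xb ⟨(i : ℕ), h⟩ else u i)
        = Φ (fun i => if h : (i : ℕ) < k then xb ⟨(i : ℕ), h⟩ else v i)) :
    ∀ xb : Fin k → unitCube d, (∀ j, xb j ∈ G) →
      Φ (fun i => if h : (i : ℕ) < k then xb ⟨(i : ℕ), h⟩ else u i)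
        = Φ (fun i => if h : (i : ℕ) < k then xb ⟨(i : ℕ), h⟩ else v i) :=
  stmt_3_general d n k M φ Φ hΦ G z hzG u v haxes
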